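/- arXiv:1706.09596 — 7 statements merged into one kernel-verified Lean document; each statement's English description precedes it below -/
import Mathlib

section
/- Let $M$ be a hypersurface of a Riemannian manifold carrying a parallel Riemannian $(p,q)$-metallic structure $J$, with induced data $P$ (symmetric tensor on $TM$), $V$ (tangent vector field) and $f$ (function) defined by $J\nu = V + f\nu$ and $JX = PX + \langle V, X\rangle \nu$ for tangent $X$ and unit normal $\nu$. If $V$ has no zeros and $JV$ is normal to $M$ (i.e. $PV = 0$), then $f = p$ identically, $\|V\|^2 = q$, and the shape operator satisfies $A(V) = 0$; in particular the Gauss-Kronecker curvature of $M$ vanishes identically. -/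
open scoped RealInnerProductSpace

/-- Hypersurface of a Riemannian metallic manifold, modelled in a trivialized chart:
the tangent spaces are identified with a fixed finite-dimensional inner product
space `E`, the induced data are the symmetric tensor field `P`, the vector field `V`,
the function `f` and the (symmetric) shape operator `A`, satisfying the induced
relations.  If `V` has no zeros and `JV` is normal (`PV = 0`), then `f = p`,
`‖V‖² = q`, `A V = 0`, and the Gauss-Kronecker curvature `det A` vanishes. -/
theorem metallic_hypersurface_JV_normal
    {E : Type*} [NormedAddCommGroup E] [InnerProductSpace ℝ E] [FiniteDimensional ℝ E]
    (p q : ℝ) (hp : 0 < p) (hq : 0 < q)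
    (P A : E → E →L[ℝ] E) (V : E → E) (f : E → ℝ)
    (hAsym : ∀ x X Y, ⟪A x X, Y⟫ = ⟪X, A x Y⟫)
    (hPsym : ∀ x X Y, ⟪P x X, Y⟫ = ⟪X, P x Y⟫)
    (h1 : ∀ x X, P x (P x X) + ⟪V x, X⟫ • V x = p • P x X + q • X)
    (h2 : ∀ x, P x (V x) + f x • V x = p • V x)
    (h3 : ∀ x, (f x) ^ 2 + ‖V x‖ ^ 2 = p * f x + q)
    (hnablaV : ∀ x X, fderiv ℝ V x X = -(P x (A x X)) + f x • A x X)
    (hdf : ∀ x X, fderiv ℝ f x X = -2 * ⟪A x X, V x⟫)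
    (hVne : ∀ x, V x ≠ 0)
    (hPV : ∀ x, P x (V x) = 0) :
    (∀ x, f x = p) ∧ (∀ x, ‖V x‖ ^ 2 = q) ∧ (∀ x, A x (V x) = 0) ∧
      (∀ x, LinearMap.det ((A x : E →ₗ[ℝ] E)) = 0) := by
  have hf : ∀ x, f x = p := by
    intro x
    have h := h2 x
    rw [hPV x, zero_add] at h
    have : (f x - p) • V x = 0 := by rw [sub_smul, h, sub_self]
    rcases smul_eq_zero.1 this with h' | h'
    · linarith [sub_eq_zero.1 (by linarith [h'] : f x - p = 0)]
    · exact absurd h' (hVne x)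
  have hV : ∀ x, ‖V x‖ ^ 2 = q := by
    intro x
    have h := h3 x
    rw [hf x] at h
    nlinarith
  have hAV : ∀ x, A x (V x) = 0 := by
    intro x
    have hfc : f = fun _ => p := funext hf
    have hderiv : fderiv ℝ f x = 0 := by rw [hfc]; exact fderiv_const_apply p
    have hinner : ∀ X : E, ⟪A x X, V x⟫ = 0 := by
      intro X
      have := hdf x X
      rw [hderiv] at this
      simp at this
      linarith [this]
    have : ⟪A x (V x), A x (V x)⟫ = 0 := by
      rw [hAsym x (V x) (A x (V x)), real_inner_comm]
      exact hinner (A x (V x))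
    exact inner_self_eq_zero.1 this
  refine ⟨hf, hV, hAV, fun x => ?_⟩
  have htfae := (LinearMap.hasEigenvalue_zero_tfae (K := ℝ) (M := E)
    ((A x).toLinearMap)).out 3 5
  exact htfae.mpr ⟨V x, hVne x, hAV x⟩
end

section
/- Under the hypotheses of the previous setup (hypersurface with induced metallic data $P, V, f$), if $J\nu$ is tangent to $M$ (i.e. $f = 0$), then $\|V\|^2 = q$, $PV = pV$, $A(V) = 0$, and the shape operator is given by $A(X) = -\frac{1}{q}\big(P(\nabla_X V) - p \nabla_X V\big)$; in particular the Gauss-Kronecker curvature vanishes identically. -/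
/-!
With `f ≡ 0` the identity `df(X) = -2⟪AX, V⟫` forces `AX ⊥ V` for every `X`, so by symmetry
of `A` we get `AV = 0`; since `‖V‖² = q > 0`, `V` is a nonzero vector in the kernel of `A` and
`det A = 0`. Moreover `∇_X V = -P(AX)`, and on `AX ⊥ V` the metallic identity reads
`P²(AX) = p P(AX) + q AX`, which can be solved for `AX` because `q ≠ 0`.
-/

open scoped RealInnerProductSpace

theorem LinearMap.det_eq_zero_of_apply_eq_zero {K M : Type*} [Field K] [AddCommGroup M]
    [Module K M] [FiniteDimensional K M] {T : M →ₗ[K] M} {v : M} (hv : v ≠ 0) (hTv : T v = 0) :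
    T.det = 0 :=
  LinearMap.det_eq_zero_iff_ker_ne_bot.mpr ((Submodule.ne_bot_iff _).mpr ⟨v, hTv, hv⟩)

section InnerProductSpace

variable {E : Type*} [NormedAddCommGroup E] [InnerProductSpace ℝ E]

theorem apply_eq_zero_of_forall_inner_apply_eq_zero {T : E →L[ℝ] E}
    (hT : ∀ X Y, ⟪T X, Y⟫ = ⟪X, T Y⟫) {v : E} (h : ∀ X, ⟪T X, v⟫ = 0) : T v = 0 :=
  inner_self_eq_zero.mp (by rw [hT, real_inner_comm]; exact h _)

theorem eq_smul_sub_of_apply_apply_eq {P : E →L[ℝ] E} {p q : ℝ} (hq : q ≠ 0) {Y : E}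
    (hY : P (P Y) = p • P Y + q • Y) :
    Y = -(1 / q) • (P (-P Y) - p • -P Y) := by
  rw [map_neg, hY]
  match_scalars <;> field_simp; ring

end InnerProductSpace

theorem metallic_hypersurface_Jnu_tangent_general
    {E : Type*} [NormedAddCommGroup E] [InnerProductSpace ℝ E] [FiniteDimensional ℝ E]
    (p q : ℝ) (hq : 0 < q)
    (P A : E → E →L[ℝ] E) (V : E → E) (f : E → ℝ)
    (hAsym : ∀ x X Y, ⟪A x X, Y⟫ = ⟪X, A x Y⟫)
    (h1 : ∀ x X, P x (P x X) + ⟪V x, X⟫ • V x = p • P x X + q • X)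
    (h2 : ∀ x, P x (V x) + f x • V x = p • V x)
    (h3 : ∀ x, (f x) ^ 2 + ‖V x‖ ^ 2 = p * f x + q)
    (hnablaV : ∀ x X, fderiv ℝ V x X = -(P x (A x X)) + f x • A x X)
    (hdf : ∀ x X, fderiv ℝ f x X = -2 * ⟪A x X, V x⟫)
    (hf : ∀ x, f x = 0) :
    (∀ x, ‖V x‖ ^ 2 = q) ∧ (∀ x, P x (V x) = p • V x) ∧ (∀ x, A x (V x) = 0) ∧
      (∀ x X, A x X =
        -(1 / q) • (P x (fderiv ℝ V x X) - p • fderiv ℝ V x X)) ∧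
      (∀ x, LinearMap.det ((A x : E →ₗ[ℝ] E)) = 0) := by
  have hAX_perp_V : ∀ x X, ⟪A x X, V x⟫ = 0 := fun x X => by
    simpa [funext hf] using hdf x X
  have hVnorm : ∀ x, ‖V x‖ ^ 2 = q := fun x => by simpa [hf x] using h3 x
  have hAV : ∀ x, A x (V x) = 0 := fun x =>
    apply_eq_zero_of_forall_inner_apply_eq_zero (hAsym x) (hAX_perp_V x)
  refine ⟨hVnorm, fun x => by simpa [hf x] using h2 x, hAV, fun x X => ?_, fun x => ?_⟩
  · have hP2 : P x (P x (A x X)) = p • P x (A x X) + q • A x X := by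
      simpa [real_inner_comm (A x X) (V x), hAX_perp_V x X] using h1 x (A x X)
    simpa [hnablaV x X, hf x] using eq_smul_sub_of_apply_apply_eq hq.ne' hP2
  · have hV : V x ≠ 0 := fun h => hq.ne (by simpa [h] using hVnorm x)
    exact LinearMap.det_eq_zero_of_apply_eq_zero hV (hAV x)

/-- Hypersurface of a Riemannian metallic manifold (trivialized chart model):
if `Jν` is tangent, i.e. `f = 0`, then `‖V‖² = q`, `PV = pV`, `A V = 0`, the shape
operator is `A X = -(1/q)(P(∇_X V) - p ∇_X V)`, and the Gauss-Kronecker curvature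
`det A` vanishes identically. -/
theorem metallic_hypersurface_Jnu_tangent
    {E : Type*} [NormedAddCommGroup E] [InnerProductSpace ℝ E] [FiniteDimensional ℝ E]
    (p q : ℝ) (hp : 0 < p) (hq : 0 < q)
    (P A : E → E →L[ℝ] E) (V : E → E) (f : E → ℝ)
    (hAsym : ∀ x X Y, ⟪A x X, Y⟫ = ⟪X, A x Y⟫)
    (hPsym : ∀ x X Y, ⟪P x X, Y⟫ = ⟪X, P x Y⟫)
    (h1 : ∀ x X, P x (P x X) + ⟪V x, X⟫ • V x = p • P x X + q • X)
    (h2 : ∀ x, P x (V x) + f x • V x = p • V x)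
    (h3 : ∀ x, (f x) ^ 2 + ‖V x‖ ^ 2 = p * f x + q)
    (hnablaV : ∀ x X, fderiv ℝ V x X = -(P x (A x X)) + f x • A x X)
    (hdf : ∀ x X, fderiv ℝ f x X = -2 * ⟪A x X, V x⟫)
    (hf : ∀ x, f x = 0) :
    (∀ x, ‖V x‖ ^ 2 = q) ∧ (∀ x, P x (V x) = p • V x) ∧ (∀ x, A x (V x) = 0) ∧
      (∀ x X, A x X =
        -(1 / q) • (P x (fderiv ℝ V x X) - p • fderiv ℝ V x X)) ∧
      (∀ x, LinearMap.det ((A x : E →ₗ[ℝ] E)) = 0) :=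
  metallic_hypersurface_Jnu_tangent_general p q hq P A V f hAsym h1 h2 h3 hnablaV hdf hf
end

section
/- Let $M^n$ be a hypersurface of a Riemannian $(p,q)$-metallic manifold with induced data $P, V, f$, such that $V$ has no zeros and $JV$ is normal (so $PV = 0$, $f = p$, $\|V\|^2 = q$, and $A(X) = -P(\nabla_X V)/q$). Then $M$ is minimal if and only if $\langle \mathrm{div}(P), V\rangle = 0$, where $\mathrm{div}(P) = \sum_i (\nabla_{e_i}P)(e_i)$ in a local orthonormal frame. -/
open scoped RealInnerProductSpace

/-!
Differentiating `P (V) = 0` gives `P (∇_X V) = -(∇_X P) V`, and `∇_X P` is symmetric because `P`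
is. Hence `⟪X, P (∇_X V)⟫ = -⟪(∇_X P) X, V⟫`, and summing over an orthonormal frame yields
`n H = tr A = ⟪div P, V⟫ / q`.
-/

theorem apply_fderiv_eq_neg_fderiv_apply_of_apply_eq_zero
    {𝕜 E F G : Type*} [NontriviallyNormedField 𝕜]
    [NormedAddCommGroup E] [NormedSpace 𝕜 E] [NormedAddCommGroup F] [NormedSpace 𝕜 F]
    [NormedAddCommGroup G] [NormedSpace 𝕜 G]
    {P : E → F →L[𝕜] G} {V : E → F} {x : E}
    (hP : DifferentiableAt 𝕜 P x) (hV : DifferentiableAt 𝕜 V x) (hPV : ∀ y, P y (V y) = 0)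
    (X : E) : P x (fderiv 𝕜 V x X) = -fderiv 𝕜 P x X (V x) := by
  have hzero : (P x).comp (fderiv 𝕜 V x) + (fderiv 𝕜 P x).flip (V x) = 0 := by
    rw [← fderiv_clm_apply hP hV, funext hPV, fderiv_const_apply]
  exact eq_neg_of_add_eq_zero_left (congrArg (· X) hzero)

section Real

variable {E : Type*} [NormedAddCommGroup E] [InnerProductSpace ℝ E]

theorem isSymmetric_fderiv_apply {P : E → E →L[ℝ] E} {x : E} (hP : DifferentiableAt ℝ P x)
    (hsym : ∀ y, (P y : E →ₗ[ℝ] E).IsSymmetric) (Z : E) :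
    (fderiv ℝ P x Z : E →ₗ[ℝ] E).IsSymmetric := by
  intro X Y
  let lhs : (E →L[ℝ] E) →L[ℝ] ℝ := (innerSLFlip ℝ Y).comp (ContinuousLinearMap.apply ℝ E X)
  let rhs : (E →L[ℝ] E) →L[ℝ] ℝ := (innerSL ℝ X).comp (ContinuousLinearMap.apply ℝ E Y)
  have hfderiv (Φ : (E →L[ℝ] E) →L[ℝ] ℝ) : fderiv ℝ (fun y => Φ (P y)) x = Φ.comp (fderiv ℝ P x) :=
    (Φ.hasFDerivAt.comp x hP.hasFDerivAt).fderiv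
  have hlr : (fun y => lhs (P y)) = fun y => rhs (P y) := funext fun y => hsym y X Y
  have hcomp : lhs.comp (fderiv ℝ P x) = rhs.comp (fderiv ℝ P x) := by
    rw [← hfderiv, ← hfderiv, hlr]
  simpa [lhs, rhs] using congrArg (· Z) hcomp

theorem trace_comp_fderiv_eq_neg_inner_sum {ι : Type*} [Fintype ι] (b : OrthonormalBasis ι ℝ E)
    {P : E → E →L[ℝ] E} {V : E → E} {x : E} (hP : DifferentiableAt ℝ P x)
    (hV : DifferentiableAt ℝ V x) (hsym : ∀ y, (P y : E →ₗ[ℝ] E).IsSymmetric)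
    (hPV : ∀ y, P y (V y) = 0) :
    LinearMap.trace ℝ E ((P x).comp (fderiv ℝ V x) : E →ₗ[ℝ] E) =
      -⟪∑ i, fderiv ℝ P x (b i) (b i), V x⟫ := by
  rw [LinearMap.trace_eq_sum_inner _ b, sum_inner, ← Finset.sum_neg_distrib]
  refine Finset.sum_congr rfl fun i _ => ?_
  rw [ContinuousLinearMap.coe_coe, ContinuousLinearMap.comp_apply,
    apply_fderiv_eq_neg_fderiv_apply_of_apply_eq_zero hP hV hPV, inner_neg_right]
  exact congrArg Neg.neg (isSymmetric_fderiv_apply hP hsym _ _ _).symm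

end Real

theorem metallic_hypersurface_minimal_iff_general
    {E : Type*} [NormedAddCommGroup E] [InnerProductSpace ℝ E]
    {ι : Type*} [Fintype ι] (b : OrthonormalBasis ι ℝ E)
    (q : ℝ) (hq : 0 < q)
    (P A : E → E →L[ℝ] E) (V : E → E)
    (hPdiff : Differentiable ℝ P) (hVdiff : Differentiable ℝ V)
    (hPsym : ∀ x X Y, ⟪P x X, Y⟫ = ⟪X, P x Y⟫)
    (hPV : ∀ x, P x (V x) = 0)
    (hA : ∀ x X, A x X = -(1 / q) • P x (fderiv ℝ V x X)) :
    ∀ x, (LinearMap.trace ℝ E ((A x : E →ₗ[ℝ] E)) = 0 ↔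
      ⟪∑ i, (fderiv ℝ P x (b i)) (b i), V x⟫ = 0) := by
  intro x
  have hAx : (A x : E →ₗ[ℝ] E) = -(1 / q) • ((P x).comp (fderiv ℝ V x) : E →ₗ[ℝ] E) :=
    LinearMap.ext (hA x)
  rw [hAx, map_smul, trace_comp_fderiv_eq_neg_inner_sum b (hPdiff x) (hVdiff x) hPsym hPV,
    smul_eq_mul, mul_eq_zero, neg_eq_zero, neg_eq_zero, or_iff_right (by positivity)]

/-- Hypersurface of a Riemannian metallic manifold (trivialized chart model) with
`V` nowhere zero, `JV` normal (`PV = 0`, `‖V‖² = q`) and shape operator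
`A X = -(1/q) P(∇_X V)`.  Then `M` is minimal (`tr A = 0`) if and only if
`⟨div P, V⟩ = 0`, where `div P = Σᵢ (∇_{eᵢ} P)(eᵢ)` in an orthonormal frame. -/
theorem metallic_hypersurface_minimal_iff
    {E : Type*} [NormedAddCommGroup E] [InnerProductSpace ℝ E] [FiniteDimensional ℝ E]
    {ι : Type*} [Fintype ι] (b : OrthonormalBasis ι ℝ E)
    (p q : ℝ) (hp : 0 < p) (hq : 0 < q)
    (P A : E → E →L[ℝ] E) (V : E → E)
    (hPdiff : Differentiable ℝ P) (hVdiff : Differentiable ℝ V)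
    (hPsym : ∀ x X Y, ⟪P x X, Y⟫ = ⟪X, P x Y⟫)
    (hVnorm : ∀ x, ‖V x‖ ^ 2 = q)
    (hPV : ∀ x, P x (V x) = 0)
    (hA : ∀ x X, A x X = -(1 / q) • P x (fderiv ℝ V x X)) :
    ∀ x, (LinearMap.trace ℝ E ((A x : E →ₗ[ℝ] E)) = 0 ↔
      ⟪∑ i, (fderiv ℝ P x (b i)) (b i), V x⟫ = 0) :=
  metallic_hypersurface_minimal_iff_general b q hq P A V hPdiff hVdiff hPsym hPV hA
end

section
/- Let $(V,g)$ be an inner product space, $V = V_1 \oplus V_2$ orthogonal, and $J$ a Riemannian $(a,b)$-complex metallic structure with block components $P, Q, R, S$ where $Q$ and $-R$ are mutually adjoint ($g(QX,\xi) = -g(X,R\xi)$). Then $Q = 0$ if and only if $P^2 + aP + b\,\mathrm{id}_{V_1} = 0$. -/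
open scoped RealInnerProductSpace

/-- For the block components of a Riemannian `(a,b)`-complex metallic structure,
with `P² + RQ = -aP - b·id` and `g(QX,ξ) = -g(X,Rξ)`, one has `Q = 0` if and only
if `P` is itself an `(a,b)`-complex metallic structure on `V₁`. -/
theorem complex_metallic_invariant_iff
    {V₁ V₂ : Type*} [NormedAddCommGroup V₁] [InnerProductSpace ℝ V₁]
    [NormedAddCommGroup V₂] [InnerProductSpace ℝ V₂]
    (a b : ℝ) (ha : 0 < a) (hb : 0 < b) (hab : 0 < 4 * b - a ^ 2)
    (P : V₁ →ₗ[ℝ] V₁) (Q : V₁ →ₗ[ℝ] V₂) (R : V₂ →ₗ[ℝ] V₁)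
    (h11 : P ∘ₗ P + R ∘ₗ Q = -(a • P) - b • LinearMap.id)
    (h16 : ∀ (X : V₁) (ξ : V₂), ⟪Q X, ξ⟫ = -⟪X, R ξ⟫) :
    Q = 0 ↔ P ∘ₗ P + a • P + b • LinearMap.id = 0 := by
  have key : P ∘ₗ P + a • P + b • LinearMap.id = -(R ∘ₗ Q) := by
    have h : R ∘ₗ Q = -(a • P) - b • LinearMap.id - P ∘ₗ P := by rw [← h11]; abel
    rw [h]; abel
  constructor
  · intro hQ
    rw [key, hQ]
    simp
  · intro hP
    rw [hP] at key
    replace key : R ∘ₗ Q = 0 := neg_eq_zero.mp key.symm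
    ext X
    have hz : ⟪Q X, Q X⟫ = 0 := by
      rw [h16 X (Q X)]
      have : R (Q X) = 0 := by
        have := congrFun (congrArg DFunLike.coe key) X
        simpa using this
      simp [this]
    simpa using inner_self_eq_zero.mp hz
end

section
/- Let $\Sigma$ be a $2k$-dimensional inner product space with an orthonormal basis $\{e_1,\dots,e_{2k}\}$ such that $e_{2i} = j e_{2i-1}$, where $j = \frac{2}{\delta}P + \frac{a}{\delta}\mathrm{id}$ for a Riemannian $(a,b)$-complex metallic structure $P$. Let $B: \Sigma \times \Sigma \to W$ be a symmetric bilinear map into a vector space $W$ carrying an endomorphism $S$ with $S^2 + aS + b\,\mathrm{id}_W = 0$, such that $S(B(X,Y)) = B(X, PY)$ for all $X,Y$. Then $\sum_{i=1}^{2k} B(e_i, e_i) = 0$ (i.e., $B$ is trace-free; the submanifold is minimal). -/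
open scoped RealInnerProductSpace

/-- Invariant submanifolds are minimal: if `Σ` has an orthonormal basis adapted to
the complex structure `j = (2/δ)P + (a/δ)id` associated with a Riemannian
`(a,b)`-complex metallic structure `P`, and the symmetric bilinear map `B` satisfies
`S(B(X,Y)) = B(X,PY)` for an `(a,b)`-complex metallic structure `S` on `W`, then
`Σᵢ B(eᵢ, eᵢ) = 0`. -/
theorem invariant_submanifold_minimal
    {T W : Type*} [NormedAddCommGroup T] [InnerProductSpace ℝ T]
    [AddCommGroup W] [Module ℝ W]
    (a b : ℝ) (ha : 0 < a) (hb : 0 < b) (hab : 0 < 4 * b - a ^ 2)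
    (δ : ℝ) (hδ : δ = Real.sqrt (4 * b - a ^ 2))
    (P : T →ₗ[ℝ] T)
    (hP : P ∘ₗ P + a • P + b • LinearMap.id = 0)
    (hPg : ∀ X Y, ⟪P X, Y⟫ = -⟪X, P Y⟫ - a * ⟪X, Y⟫)
    (S : W →ₗ[ℝ] W)
    (hS : S ∘ₗ S + a • S + b • LinearMap.id = 0)
    (B : T →ₗ[ℝ] T →ₗ[ℝ] W)
    (hBsym : ∀ X Y, B X Y = B Y X)
    (hSB : ∀ X Y, S (B X Y) = B X (P Y))
    (k : ℕ) (e : OrthonormalBasis (Fin k ⊕ Fin k) ℝ T)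
    (he : ∀ i : Fin k, e (Sum.inr i) = (2 / δ) • P (e (Sum.inl i)) + (a / δ) • e (Sum.inl i)) :
    ∑ i : Fin k ⊕ Fin k, B (e i) (e i) = 0 := by
  have hδpos : 0 < δ := by rw [hδ]; exact Real.sqrt_pos.mpr hab
  have hδ2 : δ ^ 2 = 4 * b - a ^ 2 := by rw [hδ]; exact Real.sq_sqrt hab.le
  have hS2 : ∀ w : W, S (S w) = -a • S w - b • w := by
    intro w
    have h := congrArg (fun f => f w) hS
    simp only [LinearMap.add_apply, LinearMap.comp_apply, LinearMap.smul_apply,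
      LinearMap.id_apply, LinearMap.zero_apply] at h
    have : S (S w) + a • S w + b • w = 0 := h
    linear_combination (norm := module) this
  have key : ∀ x : T, B ((2 / δ) • P x + (a / δ) • x) ((2 / δ) • P x + (a / δ) • x)
      = - B x x := by
    intro x
    have hPx : B (P x) x = B x (P x) := hBsym _ _
    have hPP : B (P x) (P x) = -a • B x (P x) - b • B x x := by
      calc B (P x) (P x) = S (B (P x) x) := (hSB _ _).symm
        _ = S (B x (P x)) := by rw [hPx]
        _ = S (S (B x x)) := by rw [← hSB x x]
        _ = -a • S (B x x) - b • B x x := hS2 _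
        _ = -a • B x (P x) - b • B x x := by rw [hSB x x]
    simp only [map_add, map_smul, LinearMap.add_apply, LinearMap.smul_apply]
    rw [hPP, hPx]
    match_scalars <;> field_simp <;> nlinarith [hδ2]
  rw [Fintype.sum_sum_type]
  have : ∀ i : Fin k, B (e (Sum.inr i)) (e (Sum.inr i)) = - B (e (Sum.inl i)) (e (Sum.inl i)) := by
    intro i; rw [he i]; exact key _
  simp only [this]
  simp
end

section
/- Let $M$ be a hypersurface of a Riemannian manifold with a parallel Riemannian $(a,b)$-complex metallic structure, with induced data $P$, $V$ ($\|V\|^2 = \delta^2/4 \neq 0$) and shape operator $A$ satisfying $\nabla_X(PY) - P(\nabla_X Y) = -\langle V,Y\rangle AX + \langle AX,Y\rangle V$ and $\nabla_X V = -P(AX) - \frac{a}{2}AX$. If $\nabla P = 0$ and $AV = 0$, then $A = 0$, i.e., $M$ is totally geodesic. -/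
open scoped RealInnerProductSpace

/-- Hypersurface of a manifold with parallel Riemannian `(a,b)`-complex metallic
structure (trivialized chart model): if `∇P = 0` and `AV = 0`, then the shape
operator vanishes, i.e. the hypersurface is totally geodesic. -/
theorem complex_metallic_hypersurface_totally_geodesic
    {E : Type*} [NormedAddCommGroup E] [InnerProductSpace ℝ E]
    (a b : ℝ) (ha : 0 < a) (hb : 0 < b) (hab : 0 < 4 * b - a ^ 2)
    (δ : ℝ) (hδ : δ = Real.sqrt (4 * b - a ^ 2))
    (P A : E → E →L[ℝ] E) (V : E → E)
    (hAsym : ∀ x X Y, ⟪A x X, Y⟫ = ⟪X, A x Y⟫)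
    (hVnorm : ∀ x, ‖V x‖ ^ 2 = δ ^ 2 / 4)
    (hPV : ∀ x, P x (V x) = -((a / 2) • V x))
    -- `(∇_X P)(Y) = -⟨V,Y⟩ AX + ⟨AX,Y⟩ V`:
    (hrel : ∀ x X Y, (fderiv ℝ P x X) Y = -(⟪V x, Y⟫ • A x X) + ⟪A x X, Y⟫ • V x)
    -- `∇_X V = -P(AX) - (a/2) AX`:
    (hnablaV : ∀ x X, fderiv ℝ V x X = -(P x (A x X)) - (a / 2) • A x X)
    (hPpar : ∀ x, fderiv ℝ P x = 0)
    (hAV : ∀ x, A x (V x) = 0) :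
    ∀ x, A x = 0 := by
  intro x
  ext X
  have h := hrel x X (V x)
  rw [hPpar x] at h
  simp only [ContinuousLinearMap.zero_apply] at h
  have hAXV : ⟪A x X, V x⟫ = 0 := by
    rw [hAsym x X (V x), hAV x, inner_zero_right]
  rw [hAXV, zero_smul, add_zero, real_inner_self_eq_norm_sq, hVnorm x] at h
  have h2 : (δ ^ 2 / 4) • A x X = 0 := neg_eq_zero.mp h.symm
  have hne : δ ^ 2 / 4 ≠ 0 := by
    have : δ ^ 2 = 4 * b - a ^ 2 := by
      rw [hδ, Real.sq_sqrt hab.le]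
    rw [this]
    positivity
  have := (smul_eq_zero.mp h2).resolve_left hne
  simpa using this
end

section
/- Let $(V,g)$ be an inner product space with orthogonal decomposition $V = V_1 \oplus V_2$, and suppose $P, Q, R, S$ (block components of $J$) satisfy the metallic relations $P^2 + RQ = pP + q\,\mathrm{id}$, $QP + SQ = pQ$, $PR + RS = pR$, $S^2 + QR = pS + q\,\mathrm{id}$. Define $f_1 = \frac{\sigma}{2\sigma-p}\mathrm{id}_{V_1} - \frac{1}{2\sigma-p}P$, $f_2 = \frac{\sigma-p}{2\sigma-p}\mathrm{id}_{V_1} + \frac{1}{2\sigma-p}P$, $h_1 = -h_2 = -\frac{1}{2\sigma-p}Q$, $s_1 = -s_2 = -\frac{1}{2\sigma-p}R$, $t_1 = \frac{\sigma}{2\sigma-p}\mathrm{id}_{V_2} - \frac{1}{2\sigma-p}S$, $t_2 = \frac{\sigma-p}{2\sigma-p}\mathrm{id}_{V_2} + \frac{1}{2\sigma-p}S$, with $\sigma = \sigma_{p,q}$. Then for $i,j \in \{1,2\}$: $f_i \circ f_j + s_i \circ h_j = \delta_i^j f_i$, $t_i \circ t_j + h_i \circ s_j = \delta_i^j t_i$,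 $f_i \circ s_j + s_i \circ t_j = \delta_i^j s_i$, and $h_i \circ f_j + t_i \circ h_j = \delta_i^j h_i$. -/
set_option maxHeartbeats 2000000 in
/-- The eight operators `f₁, f₂, h₁, h₂, s₁, s₂, t₁, t₂` built from the block
components `P, Q, R, S` of a metallic structure satisfy the product-structure
projection relations with Kronecker delta. -/
theorem metallic_eight_operators
    {V₁ V₂ : Type*} [AddCommGroup V₁] [Module ℝ V₁] [AddCommGroup V₂] [Module ℝ V₂]
    (p q : ℝ) (hp : 0 < p) (hq : 0 < q)
    (σ : ℝ) (hσ : σ = (p + Real.sqrt (p ^ 2 + 4 * q)) / 2)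
    (P : V₁ →ₗ[ℝ] V₁) (Q : V₁ →ₗ[ℝ] V₂) (R : V₂ →ₗ[ℝ] V₁) (S : V₂ →ₗ[ℝ] V₂)
    (h11 : P ∘ₗ P + R ∘ₗ Q = p • P + q • LinearMap.id)
    (h12 : Q ∘ₗ P + S ∘ₗ Q = p • Q)
    (h13 : P ∘ₗ R + R ∘ₗ S = p • R)
    (h14 : S ∘ₗ S + Q ∘ₗ R = p • S + q • LinearMap.id)
    (f : Fin 2 → V₁ →ₗ[ℝ] V₁) (h : Fin 2 → V₁ →ₗ[ℝ] V₂)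
    (s : Fin 2 → V₂ →ₗ[ℝ] V₁) (t : Fin 2 → V₂ →ₗ[ℝ] V₂)
    (hf0 : f 0 = (σ / (2 * σ - p)) • LinearMap.id - (1 / (2 * σ - p)) • P)
    (hf1 : f 1 = ((σ - p) / (2 * σ - p)) • LinearMap.id + (1 / (2 * σ - p)) • P)
    (hh0 : h 0 = -((1 / (2 * σ - p)) • Q)) (hh1 : h 1 = (1 / (2 * σ - p)) • Q)
    (hs0 : s 0 = -((1 / (2 * σ - p)) • R)) (hs1 : s 1 = (1 / (2 * σ - p)) • R)
    (ht0 : t 0 = (σ / (2 * σ - p)) • LinearMap.id - (1 / (2 * σ - p)) • S)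
    (ht1 : t 1 = ((σ - p) / (2 * σ - p)) • LinearMap.id + (1 / (2 * σ - p)) • S) :
    ∀ i j : Fin 2,
      (f i ∘ₗ f j + s i ∘ₗ h j = if i = j then f i else 0) ∧
      (t i ∘ₗ t j + h i ∘ₗ s j = if i = j then t i else 0) ∧
      (f i ∘ₗ s j + s i ∘ₗ t j = if i = j then s i else 0) ∧
      (h i ∘ₗ f j + t i ∘ₗ h j = if i = j then h i else 0) := by
  have hsq : Real.sqrt (p ^ 2 + 4 * q) ^ 2 = p ^ 2 + 4 * q :=
    Real.sq_sqrt (by positivity)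
  have hspos : 0 < Real.sqrt (p ^ 2 + 4 * q) := Real.sqrt_pos.mpr (by positivity)
  have hne : 2 * σ - p ≠ 0 := by
    rw [hσ]; intro hc; linarith
  have hne2 : σ * 2 - p ≠ 0 := fun hc => hne (by linarith)
  have hσq : σ * σ = p * σ + q := by
    rw [hσ]; linear_combination hsq / 4
  have hq' : q = σ * σ - p * σ := by linarith
  have E1 : ∀ v : V₁, P (P v) = p • P v + (σ * σ - p * σ) • v - R (Q v) := by
    intro v
    have e := congrFun (congrArg DFunLike.coe h11) v
    simp only [LinearMap.add_apply, LinearMap.comp_apply, LinearMap.smul_apply,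
      LinearMap.id_apply] at e
    rw [← hq']; linear_combination (norm := module) e
  have E2 : ∀ v : V₁, Q (P v) = p • Q v - S (Q v) := by
    intro v
    have e := congrFun (congrArg DFunLike.coe h12) v
    simp only [LinearMap.add_apply, LinearMap.comp_apply, LinearMap.smul_apply] at e
    linear_combination (norm := module) e
  have E3 : ∀ v : V₂, P (R v) = p • R v - R (S v) := by
    intro v
    have e := congrFun (congrArg DFunLike.coe h13) v
    simp only [LinearMap.add_apply, LinearMap.comp_apply, LinearMap.smul_apply] at e
    linear_combination (norm := module) e
  have E4 : ∀ v : V₂, S (S v) = p • S v + (σ * σ - p * σ) • v - Q (R v) := by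
    intro v
    have e := congrFun (congrArg DFunLike.coe h14) v
    simp only [LinearMap.add_apply, LinearMap.comp_apply, LinearMap.smul_apply,
      LinearMap.id_apply] at e
    rw [← hq']; linear_combination (norm := module) e
  have HA00 : f 0 ∘ₗ f 0 + s 0 ∘ₗ h 0 = f 0 := by
    rw [hf0, hh0, hs0]
    ext v
    simp only [LinearMap.add_apply, LinearMap.comp_apply, LinearMap.smul_apply,
      LinearMap.sub_apply, LinearMap.neg_apply, LinearMap.id_apply, map_add, map_sub,
      map_smul, map_neg, LinearMap.zero_apply, E1, E2, E3, E4]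
    match_scalars <;> field_simp <;> first | ring1 | (left; ring1) | (right; ring1) | tauto
  have HA01 : f 0 ∘ₗ f 1 + s 0 ∘ₗ h 1 = 0 := by
    rw [hf0, hf1, hh1, hs0]
    ext v
    simp only [LinearMap.add_apply, LinearMap.comp_apply, LinearMap.smul_apply,
      LinearMap.sub_apply, LinearMap.neg_apply, LinearMap.id_apply, map_add, map_sub,
      map_smul, map_neg, LinearMap.zero_apply, E1, E2, E3, E4]
    match_scalars <;> field_simp <;> first | ring1 | (left; ring1) | (right; ring1) | tauto
  have HA10 : f 1 ∘ₗ f 0 + s 1 ∘ₗ h 0 = 0 := by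
    rw [hf0, hf1, hh0, hs1]
    ext v
    simp only [LinearMap.add_apply, LinearMap.comp_apply, LinearMap.smul_apply,
      LinearMap.sub_apply, LinearMap.neg_apply, LinearMap.id_apply, map_add, map_sub,
      map_smul, map_neg, LinearMap.zero_apply, E1, E2, E3, E4]
    match_scalars <;> field_simp <;> first | ring1 | (left; ring1) | (right; ring1) | tauto
  have HA11 : f 1 ∘ₗ f 1 + s 1 ∘ₗ h 1 = f 1 := by
    rw [hf1, hh1, hs1]
    ext v
    simp only [LinearMap.add_apply, LinearMap.comp_apply, LinearMap.smul_apply,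
      LinearMap.sub_apply, LinearMap.neg_apply, LinearMap.id_apply, map_add, map_sub,
      map_smul, map_neg, LinearMap.zero_apply, E1, E2, E3, E4]
    match_scalars <;> field_simp <;> first | ring1 | (left; ring1) | (right; ring1) | tauto
  have HB00 : t 0 ∘ₗ t 0 + h 0 ∘ₗ s 0 = t 0 := by
    rw [hh0, hs0, ht0]
    ext v
    simp only [LinearMap.add_apply, LinearMap.comp_apply, LinearMap.smul_apply,
      LinearMap.sub_apply, LinearMap.neg_apply, LinearMap.id_apply, map_add, map_sub,
      map_smul, map_neg, LinearMap.zero_apply, E1, E2, E3, E4]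
    match_scalars <;> field_simp <;> first | ring1 | (left; ring1) | (right; ring1) | tauto
  have HB01 : t 0 ∘ₗ t 1 + h 0 ∘ₗ s 1 = 0 := by
    rw [hh0, hs1, ht0, ht1]
    ext v
    simp only [LinearMap.add_apply, LinearMap.comp_apply, LinearMap.smul_apply,
      LinearMap.sub_apply, LinearMap.neg_apply, LinearMap.id_apply, map_add, map_sub,
      map_smul, map_neg, LinearMap.zero_apply, E1, E2, E3, E4]
    match_scalars <;> field_simp <;> first | ring1 | (left; ring1) | (right; ring1) | tauto
  have HB10 : t 1 ∘ₗ t 0 + h 1 ∘ₗ s 0 = 0 := by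
    rw [hh1, hs0, ht0, ht1]
    ext v
    simp only [LinearMap.add_apply, LinearMap.comp_apply, LinearMap.smul_apply,
      LinearMap.sub_apply, LinearMap.neg_apply, LinearMap.id_apply, map_add, map_sub,
      map_smul, map_neg, LinearMap.zero_apply, E1, E2, E3, E4]
    match_scalars <;> field_simp <;> first | ring1 | (left; ring1) | (right; ring1) | tauto
  have HB11 : t 1 ∘ₗ t 1 + h 1 ∘ₗ s 1 = t 1 := by
    rw [hh1, hs1, ht1]
    ext v
    simp only [LinearMap.add_apply, LinearMap.comp_apply, LinearMap.smul_apply,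
      LinearMap.sub_apply, LinearMap.neg_apply, LinearMap.id_apply, map_add, map_sub,
      map_smul, map_neg, LinearMap.zero_apply, E1, E2, E3, E4]
    match_scalars <;> field_simp <;> first | ring1 | (left; ring1) | (right; ring1) | tauto
  have HC00 : f 0 ∘ₗ s 0 + s 0 ∘ₗ t 0 = s 0 := by
    rw [hf0, hs0, ht0]
    ext v
    simp only [LinearMap.add_apply, LinearMap.comp_apply, LinearMap.smul_apply,
      LinearMap.sub_apply, LinearMap.neg_apply, LinearMap.id_apply, map_add, map_sub,
      map_smul, map_neg, LinearMap.zero_apply, E1, E2, E3, E4]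
    match_scalars <;> field_simp <;> first | ring1 | (left; ring1) | (right; ring1) | tauto
  have HC01 : f 0 ∘ₗ s 1 + s 0 ∘ₗ t 1 = 0 := by
    rw [hf0, hs0, hs1, ht1]
    ext v
    simp only [LinearMap.add_apply, LinearMap.comp_apply, LinearMap.smul_apply,
      LinearMap.sub_apply, LinearMap.neg_apply, LinearMap.id_apply, map_add, map_sub,
      map_smul, map_neg, LinearMap.zero_apply, E1, E2, E3, E4]
    match_scalars <;> field_simp <;> first | ring1 | (left; ring1) | (right; ring1) | tauto
  have HC10 : f 1 ∘ₗ s 0 + s 1 ∘ₗ t 0 = 0 := by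
    rw [hf1, hs0, hs1, ht0]
    ext v
    simp only [LinearMap.add_apply, LinearMap.comp_apply, LinearMap.smul_apply,
      LinearMap.sub_apply, LinearMap.neg_apply, LinearMap.id_apply, map_add, map_sub,
      map_smul, map_neg, LinearMap.zero_apply, E1, E2, E3, E4]
    match_scalars <;> field_simp <;> first | ring1 | (left; ring1) | (right; ring1) | tauto
  have HC11 : f 1 ∘ₗ s 1 + s 1 ∘ₗ t 1 = s 1 := by
    rw [hf1, hs1, ht1]
    ext v
    simp only [LinearMap.add_apply, LinearMap.comp_apply, LinearMap.smul_apply,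
      LinearMap.sub_apply, LinearMap.neg_apply, LinearMap.id_apply, map_add, map_sub,
      map_smul, map_neg, LinearMap.zero_apply, E1, E2, E3, E4]
    match_scalars <;> field_simp <;> first | ring1 | (left; ring1) | (right; ring1) | tauto
  have HD00 : h 0 ∘ₗ f 0 + t 0 ∘ₗ h 0 = h 0 := by
    rw [hf0, hh0, ht0]
    ext v
    simp only [LinearMap.add_apply, LinearMap.comp_apply, LinearMap.smul_apply,
      LinearMap.sub_apply, LinearMap.neg_apply, LinearMap.id_apply, map_add, map_sub,
      map_smul, map_neg, LinearMap.zero_apply, E1, E2, E3, E4]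
    match_scalars <;> field_simp <;> first | ring1 | (left; ring1) | (right; ring1) | tauto
  have HD01 : h 0 ∘ₗ f 1 + t 0 ∘ₗ h 1 = 0 := by
    rw [hf1, hh0, hh1, ht0]
    ext v
    simp only [LinearMap.add_apply, LinearMap.comp_apply, LinearMap.smul_apply,
      LinearMap.sub_apply, LinearMap.neg_apply, LinearMap.id_apply, map_add, map_sub,
      map_smul, map_neg, LinearMap.zero_apply, E1, E2, E3, E4]
    match_scalars <;> field_simp <;> first | ring1 | (left; ring1) | (right; ring1) | tauto
  have HD10 : h 1 ∘ₗ f 0 + t 1 ∘ₗ h 0 = 0 := by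
    rw [hf0, hh0, hh1, ht1]
    ext v
    simp only [LinearMap.add_apply, LinearMap.comp_apply, LinearMap.smul_apply,
      LinearMap.sub_apply, LinearMap.neg_apply, LinearMap.id_apply, map_add, map_sub,
      map_smul, map_neg, LinearMap.zero_apply, E1, E2, E3, E4]
    match_scalars <;> field_simp <;> first | ring1 | (left; ring1) | (right; ring1) | tauto
  have HD11 : h 1 ∘ₗ f 1 + t 1 ∘ₗ h 1 = h 1 := by
    rw [hf1, hh1, ht1]
    ext v
    simp only [LinearMap.add_apply, LinearMap.comp_apply, LinearMap.smul_apply,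
      LinearMap.sub_apply, LinearMap.neg_apply, LinearMap.id_apply, map_add, map_sub,
      map_smul, map_neg, LinearMap.zero_apply, E1, E2, E3, E4]
    match_scalars <;> field_simp <;> first | ring1 | (left; ring1) | (right; ring1) | tauto
  intro i j
  fin_cases i <;> fin_cases j <;>
    refine ⟨?_, ?_, ?_, ?_⟩ <;>
    simp only [Fin.zero_eta, Fin.mk_one, Fin.isValue, reduceIte] <;>
    first
      | exact HA00 | exact HA01 | exact HA10 | exact HA11
      | exact HB00 | exact HB01 | exact HB10 | exact HB11
      | exact HC00 | exact HC01 | exact HC10 | exact HC11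
      | exact HD00 | exact HD01 | exact HD10 | exact HD11
end
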